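/- With notation as above (H* graded connected with H^1 = 0, QM = H* ⊗ M, F_1 = ker(QM → M)), if M^q = 0 for q < 2p, then F_1^q = 0 for q < 2p + 2. Hence in the inductive construction F_0 = M, F_{n+1} = ker(QF_n → F_n), one has F_n^q = 0 for q < 2n whenever M is concentrated in nonnegative degrees. -/

import Mathlib

open TensorProduct

/-!
STATEMENT 9: With notation as above (`H*` graded connected with `H^1 = 0`,
`QM = H* ⊗ M`, `F_1 = ker(QM → M)`), if `M^q = 0` for `q < 2p`, then
`F_1^q = 0` for `q < 2p + 2`.  Hence in the inductive construction `F_0 = M`,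
`F_{n+1} = ker(QF_n → F_n)`, one has `F_n^q = 0` for `q < 2n` whenever `M` is
concentrated in nonnegative degrees.
-/

section
variable (R : Type) [CommRing R] [Algebra ℚ R]
variable (M : Type) [AddCommGroup M] [Module ℚ M] [Module R M] [IsScalarTower ℚ R M]

/-- `QM = H* ⊗_ℚ M`, with `H*`-module structure on the left factor. -/
abbrev QM : Type := R ⊗[ℚ] M

noncomputable example : Module R (QM R M) := inferInstance

/-- The structure map `σ : QM = H* ⊗ M → M`, `h ⊗ m ↦ h·m`. -/
noncomputable def sigma : QM R M →ₗ[ℚ] M :=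
  TensorProduct.lift
    (LinearMap.mk₂ ℚ (fun (a : R) (m : M) => a • m)
      (fun a b m => add_smul a b m)
      (fun q a m => smul_assoc q a m)
      (fun a m m' => smul_add a m m')
      (fun q a m => (smul_comm q a m).symm))

variable (𝒜 : ℕ → Submodule ℚ R) (ℳ : ℕ → Submodule ℚ M)

/-- The total grading of `QM = H* ⊗ M`: `(QM)^q = ⊕_{i+j=q} H^i ⊗ M^j`. -/
noncomputable def gradeQM (q : ℕ) : Submodule ℚ (QM R M) :=
  ⨆ (ij : ℕ × ℕ) (_ : ij.1 + ij.2 = q),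
    LinearMap.range (TensorProduct.map (𝒜 ij.1).subtype (ℳ ij.2).subtype)

theorem aux_kernel_connectivity
    (R : Type) [CommRing R] [Algebra ℚ R]
    (M : Type) [AddCommGroup M] [Module ℚ M] [Module R M] [IsScalarTower ℚ R M]
    (𝒜 : ℕ → Submodule ℚ R)
    (hconn : ∀ x ∈ 𝒜 0, ∃ c : ℚ, x = algebraMap ℚ R c)
    (h1 : 𝒜 1 = ⊥)
    (ℳ : ℕ → Submodule ℚ M)
    (p : ℕ) (hM : ∀ q < 2 * p, ℳ q = ⊥)
    (q : ℕ) (hq : q < 2 * p + 2) :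
    LinearMap.ker (sigma R M) ⊓ gradeQM R M 𝒜 ℳ q = ⊥ := by
  set L : QM R M →ₗ[ℚ] QM R M :=
    LinearMap.id - (TensorProduct.mk ℚ R M 1).comp (sigma R M) with hL
  have hgrade : gradeQM R M 𝒜 ℳ q ≤ LinearMap.ker L := by
    refine iSup_le fun ij => iSup_le fun hij => ?_
    rw [TensorProduct.range_map_eq_span_tmul, Submodule.span_le]
    rintro _ ⟨⟨a, ha⟩, ⟨m, hm⟩, rfl⟩
    simp only [Submodule.coe_subtype, SetLike.mem_coe, LinearMap.mem_ker, hL,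
      LinearMap.sub_apply, LinearMap.id_apply, LinearMap.comp_apply,
      TensorProduct.mk_apply, sigma, TensorProduct.lift.tmul, LinearMap.mk₂_apply,
      sub_eq_zero]
    by_cases hj : ij.2 < 2 * p
    · have : m = 0 := by
        have := hM ij.2 hj ▸ hm
        simpa using this
      simp [this]
    · -- ij.1 ≤ 1
      obtain h | h : ij.1 = 0 ∨ ij.1 = 1 := by omega
      · obtain ⟨c, rfl⟩ := hconn a (by rwa [h] at ha)
        rw [algebraMap_smul, Algebra.algebraMap_eq_smul_one, TensorProduct.smul_tmul]
      · have : a = 0 := by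
          have := h1 ▸ (h ▸ ha)
          simpa using this
        simp [this]
  refine eq_bot_iff.mpr fun x hx => ?_
  obtain ⟨hker, hmem⟩ := hx
  have hLx : L x = 0 := hgrade hmem
  have : x = (1 : R) ⊗ₜ[ℚ] (sigma R M x) := by
    have := sub_eq_zero.mp (by simpa [hL] using hLx)
    simpa using this
  rw [Submodule.mem_bot, this, LinearMap.mem_ker.mp hker, TensorProduct.tmul_zero]

/-- The connectivity estimate for Smith's construction: the kernel
`F₁ = ker σ` of `QM → M` is `2`-more connected than `M`, and hence the iterated
kernels `F_n` satisfy `F_n^q = 0` for `q < 2n`. -/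
theorem kernel_connectivity_of_QM
    (R : Type) [CommRing R] [Algebra ℚ R]
    (M : Type) [AddCommGroup M] [Module ℚ M] [Module R M] [IsScalarTower ℚ R M]
    (𝒜 : ℕ → Submodule ℚ R) [DirectSum.Decomposition 𝒜] [SetLike.GradedMonoid 𝒜]
    (ℳ : ℕ → Submodule ℚ M) [DirectSum.Decomposition ℳ] [SetLike.GradedSMul 𝒜 ℳ]
    -- connectedness: `H^0 = ℚ`
    (hconn : ∀ x ∈ 𝒜 0, ∃ c : ℚ, x = algebraMap ℚ R c)
    -- simple connectedness: `H^1 = 0`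
    (h1 : 𝒜 1 = ⊥) :
    -- if `M^q = 0` for `q < 2p`, then `F₁ = ker σ` satisfies `F₁^q = 0` for `q < 2p+2` …
    (∀ p : ℕ, (∀ q < 2 * p, ℳ q = ⊥) →
      ∀ q < 2 * p + 2, LinearMap.ker (sigma R M) ⊓ gradeQM R M 𝒜 ℳ q = ⊥) ∧
    -- … hence, in the inductive construction `F 0 = M`, `F (n+1) = ker (Q (F n) → F n)`
    -- (realized by graded embeddings `F (n+1) ↪ Q (F n)` onto the kernel of `σ`),
    -- one has `F n ^ q = 0` for `q < 2n`:
    (∀ (F : ℕ → Type) [∀ n, AddCommGroup (F n)] [∀ n, Module ℚ (F n)]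
      [∀ n, Module R (F n)] [∀ n, IsScalarTower ℚ R (F n)]
      (𝔽 : ∀ n, ℕ → Submodule ℚ (F n))
      (e₀ : F 0 ≃ₗ[ℚ] M), (∀ q, Submodule.map e₀.toLinearMap (𝔽 0 q) = ℳ q) →
      ∀ (ι : ∀ n, F (n+1) →ₗ[ℚ] QM R (F n)),
        (∀ n, Function.Injective (ι n)) →
        (∀ n, LinearMap.range (ι n) = LinearMap.ker (sigma R (F n))) →
        (∀ n q, Set.BijOn (ι n) (𝔽 (n+1) q : Set (F (n+1)))
          ((LinearMap.ker (sigma R (F n)) ⊓ gradeQM R (F n) 𝒜 (𝔽 n) q : Submodule ℚ (QM R (F n))) :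
            Set (QM R (F n)))) →
      ∀ n q, q < 2 * n → 𝔽 n q = ⊥) := by
  constructor
  · intro p hM q hq
    exact aux_kernel_connectivity R M 𝒜 hconn h1 ℳ p hM q hq
  · intro F _ _ _ _ 𝔽 e₀ he₀ ι hinj hrange hbij n
    induction n with
    | zero => intro q hq; omega
    | succ n IH =>
      intro q hq
      have key : LinearMap.ker (sigma R (F n)) ⊓ gradeQM R (F n) 𝒜 (𝔽 n) q = ⊥ :=
        aux_kernel_connectivity R (F n) 𝒜 hconn h1 (𝔽 n) n
          (fun q' hq' => IH q' hq') q (by omega)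
      refine eq_bot_iff.mpr fun x hx => ?_
      have hmem := (hbij n q).mapsTo hx
      rw [key] at hmem
      have : ι n x = 0 := by simpa using hmem
      rw [Submodule.mem_bot]
      exact hinj n (by simpa using this)
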